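/- Define, for n ≥ 0 and k ≥ 0, the poly-Bernoulli numbers with q-parameter B_{n,q}^{(-k)} := ∑_{m=0}^{n} S(n, m) · (−q)^{n−m} · m! · (m+1)^k. Then for all n ≥ 1 and k ≥ 0, B_{n,q}^{(-(k+1))} = (n+1) · B_{n,q}^{(-k)} + ∑_{i=1}^{n−1} q^i · C(n, i+1) · B_{n−i,q}^{(-k)}, where C(n, j) is the binomial coefficient. -/

import Mathlib

open Finset Polynomial

/-- The Stirling numbers of the second kind. -/
def stirling : ℕ → ℕ → ℕ
  | 0, 0 => 1
  | 0, _ + 1 => 0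
  | _ + 1, 0 => 0
  | n + 1, k + 1 => stirling n k + (k + 1) * stirling n (k + 1)

/-- The poly-Bernoulli numbers with a q-parameter (negative upper index `-k`):
`B_{n,q}^{(-k)} = ∑_{m=0}^n S(n,m) (-q)^{n-m} m! (m+1)^k`, as polynomials in `q`. -/
noncomputable def polyBernoulliQ (n k : ℕ) : Polynomial ℚ :=
  ∑ m ∈ Finset.range (n + 1),
    (stirling n m : Polynomial ℚ) * (-Polynomial.X) ^ (n - m) *
      (m.factorial : Polynomial ℚ) * ((m : Polynomial ℚ) + 1) ^ k

/-!
Since `q^i (-q)^{n-i-m} = (-1)^i (-q)^{n-m}`, expanding each `q^i B_{n-i,q}^{(-k)}` and comparing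
coefficients of `(-q)^{n-m} m! (m+1)^k` reduces the recurrence, written with the sum running over
all `0 ≤ i ≤ n`, to `∑_{i=0}^{n} (-1)^i C(n,i+1) S(n-i,m) = m S(n,m)`. Up to the term
`S(n+1,m)`, the left side is minus the `n`-th forward difference at `0` of `r ↦ S(r+1,m)`, and
that difference is `S(n,m-1)` (or `0` for `m = 0`) because the Stirling recurrence reads
`Δ S(·+1, m+1) = m S(·+1, m+1) + S(·+1, m)`.
-/

open fwdDiff

theorem stirling_eq_stirlingSecond : stirling = Nat.stirlingSecond := by
  funext n m
  induction n generalizing m with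
  | zero => cases m <;> rfl
  | succ n ih =>
    cases m with
    | zero => rfl
    | succ m => rw [stirling, Nat.stirlingSecond_succ_succ, ih, ih, add_comm]

namespace Nat

variable {R : Type*} [CommRing R]

theorem fwdDiff_stirlingSecond_succ_succ (m : ℕ) :
    Δ_[1] (fun r ↦ (stirlingSecond (r + 1) (m + 1) : R))
      = (m : R) • (fun r ↦ (stirlingSecond (r + 1) (m + 1) : R))
        + fun r ↦ (stirlingSecond (r + 1) m : R) := by
  funext r
  simp only [fwdDiff, stirlingSecond_succ_succ (r + 1) m, Pi.add_apply, Pi.smul_apply,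
    smul_eq_mul]
  push_cast
  ring

theorem fwdDiff_iter_stirlingSecond_succ_succ (n m : ℕ) :
    Δ_[1] ^[n] (fun r ↦ (stirlingSecond (r + 1) (m + 1) : R)) 0 = stirlingSecond n m := by
  induction n generalizing m with
  | zero => cases m <;> simp [stirlingSecond]
  | succ n ih =>
    rw [Function.iterate_succ_apply, fwdDiff_stirlingSecond_succ_succ, fwdDiff_iter_add,
      fwdDiff_iter_const_smul, Pi.add_apply, Pi.smul_apply, ih, smul_eq_mul]
    cases m with
    | zero => simp [fwdDiff_iter_eq_sum_shift]
    | succ m => rw [ih, stirlingSecond_succ_succ]; push_cast; ring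

theorem sum_range_neg_one_pow_mul_choose_mul_stirlingSecond (n m : ℕ) :
    ∑ i ∈ range (n + 1), (-1 : R) ^ i * n.choose i * stirlingSecond (n - i + 1) (m + 1)
      = stirlingSecond n m := by
  rw [← fwdDiff_iter_stirlingSecond_succ_succ, fwdDiff_iter_eq_sum_shift, ← sum_range_reflect]
  refine sum_congr rfl fun i hi ↦ ?_
  have hi : i ≤ n := Nat.lt_succ_iff.1 (mem_range.1 hi)
  rw [Nat.add_sub_cancel, Nat.sub_sub_self hi, choose_symm hi, zsmul_eq_mul]
  simp

theorem sum_range_neg_one_pow_mul_choose_succ_mul_stirlingSecond (n m : ℕ) :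
    ∑ i ∈ range (n + 1), (-1 : R) ^ i * n.choose (i + 1) * stirlingSecond (n - i) m
      = m * stirlingSecond n m := by
  have hsplit : ∑ i ∈ range n, (-1 : R) ^ i * n.choose (i + 1) * stirlingSecond (n - i) m
      + ∑ i ∈ range (n + 1), (-1 : R) ^ i * n.choose i * stirlingSecond (n - i + 1) m
      = stirlingSecond (n + 1) m := by
    rw [sum_range_succ', ← add_assoc, ← sum_add_distrib]
    have hcancel : ∀ i ∈ range n, (-1 : R) ^ i * n.choose (i + 1) * stirlingSecond (n - i) m
        + (-1 : R) ^ (i + 1) * n.choose (i + 1) * stirlingSecond (n - (i + 1) + 1) m = 0 := by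
      intro i hi
      rw [Nat.sub_add_eq, Nat.sub_add_cancel (Nat.sub_pos_of_lt (mem_range.1 hi)), pow_succ]
      ring
    simp [sum_congr rfl hcancel]
  rw [sum_range_succ, choose_succ_self, cast_zero, mul_zero, zero_mul, add_zero]
  cases m with
  | zero => simpa using hsplit
  | succ m =>
    rw [sum_range_neg_one_pow_mul_choose_mul_stirlingSecond, stirlingSecond_succ_succ] at hsplit
    push_cast at hsplit ⊢
    linear_combination hsplit

end Nat

theorem sum_range_choose_succ_smul {M : Type*} [AddCommMonoid M] (n : ℕ) (f : ℕ → M) :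
    ∑ i ∈ range (n + 1), n.choose (i + 1) • f i
      = n • f 0 + ∑ i ∈ Icc 1 (n - 1), n.choose (i + 1) • f i := by
  cases n with
  | zero => simp
  | succ n =>
    rw [sum_range_succ, Nat.choose_succ_self, zero_smul, add_zero, sum_range_succ',
      Nat.add_sub_cancel, ← Ico_add_one_right_eq_Icc, sum_Ico_eq_sum_range]
    simp [add_comm]

theorem X_pow_mul_polyBernoulliQ_sub {i n : ℕ} (h : i ≤ n) (k : ℕ) :
    (X : ℚ[X]) ^ i * polyBernoulliQ (n - i) k
      = ∑ m ∈ range (n + 1), (-1 : ℚ[X]) ^ i * (Nat.stirlingSecond (n - i) m : ℚ[X])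
          * ((-X : ℚ[X]) ^ (n - m) * m.factorial * ((m : ℚ[X]) + 1) ^ k) := by
  rw [polyBernoulliQ, stirling_eq_stirlingSecond, mul_sum,
    sum_subset (range_subset_range.2 (by omega : n - i + 1 ≤ n + 1))]
  · refine sum_congr rfl fun m _ ↦ ?_
    by_cases hm : m ≤ n - i
    · have hX : (X : ℚ[X]) ^ i * (-X) ^ (n - i - m) = (-1) ^ i * (-X) ^ (n - m) := by
        rw [show n - m = i + (n - i - m) by omega, pow_add, ← mul_assoc, ← mul_pow, neg_one_mul,
          neg_neg]
      linear_combination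
        (Nat.stirlingSecond (n - i) m * m.factorial * ((m : ℚ[X]) + 1) ^ k) * hX
    · simp [Nat.stirlingSecond_eq_zero_of_lt (not_le.1 hm)]
  · intro m _ hm
    simp [Nat.stirlingSecond_eq_zero_of_lt (by simpa using hm : n - i < m)]

theorem polyBernoulliQ_succ (n k : ℕ) :
    polyBernoulliQ n (k + 1) = polyBernoulliQ n k
      + ∑ i ∈ range (n + 1),
          (X : ℚ[X]) ^ i * (n.choose (i + 1) : ℚ[X]) * polyBernoulliQ (n - i) k := by
  have hexpand : ∀ i ∈ range (n + 1),
      (X : ℚ[X]) ^ i * (n.choose (i + 1) : ℚ[X]) * polyBernoulliQ (n - i) k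
        = ∑ m ∈ range (n + 1),
            (-1 : ℚ[X]) ^ i * (n.choose (i + 1) : ℚ[X])
              * (Nat.stirlingSecond (n - i) m : ℚ[X])
              * ((-X : ℚ[X]) ^ (n - m) * m.factorial * ((m : ℚ[X]) + 1) ^ k) := by
    intro i hi
    rw [mul_right_comm, X_pow_mul_polyBernoulliQ_sub (Nat.lt_succ_iff.1 (mem_range.1 hi)),
      sum_mul]
    exact sum_congr rfl fun m _ ↦ by ring
  rw [sum_congr rfl hexpand, sum_comm]
  simp only [← sum_mul, Nat.sum_range_neg_one_pow_mul_choose_succ_mul_stirlingSecond]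
  simp only [polyBernoulliQ, stirling_eq_stirlingSecond, ← sum_add_distrib]
  exact sum_congr rfl fun m _ ↦ by ring

theorem polyBernoulliQ_rec (n k : ℕ) :
    polyBernoulliQ n (k + 1)
      = ((n : Polynomial ℚ) + 1) * polyBernoulliQ n k
        + ∑ i ∈ Finset.Icc 1 (n - 1),
            (Polynomial.X : Polynomial ℚ) ^ i * (n.choose (i + 1) : Polynomial ℚ) *
              polyBernoulliQ (n - i) k := by
  have hsmul : ∀ s : Finset ℕ,
      ∑ i ∈ s, (X : ℚ[X]) ^ i * (n.choose (i + 1) : ℚ[X]) * polyBernoulliQ (n - i) k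
        = ∑ i ∈ s, n.choose (i + 1) • ((X : ℚ[X]) ^ i * polyBernoulliQ (n - i) k) :=
    fun s ↦ sum_congr rfl fun i _ ↦ by rw [nsmul_eq_mul]; ring
  rw [polyBernoulliQ_succ, hsmul, hsmul, sum_range_choose_succ_smul, nsmul_eq_mul, pow_zero,
    one_mul, Nat.sub_zero]
  ring
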